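/- Let X be a finite partially ordered set whose comparability graph G is connected, let T be a spanning tree of G, and let R be a ring. Then every multiplicative automorphism φ of I(X,R) factors as φ = φ₁ ∘ φ₀ (composition, in either order since these automorphisms commute), where φ₀ is a fractional automorphism of I(X,R) and φ₁ is a multiplicative automorphism of I(X,R) satisfying φ₁(e_{xy}) = e_{xy} for every tree edge x < y. -/

import Mathlib

/-- A ring automorphism of the incidence algebra is *multiplicative* if it fixes every
function supported on the diagonal and maps functions vanishing on the diagonal to
functions vanishing on the diagonal. -/
def IsMultAut {X R : Type*} [Preorder X] [LocallyFiniteOrder X] [DecidableEq X] [Ring R]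
    (φ : RingAut (IncidenceAlgebra R X)) : Prop :=
  (∀ f : IncidenceAlgebra R X, (∀ x y : X, x ≠ y → f x y = 0) → φ f = f) ∧
  (∀ f : IncidenceAlgebra R X, (∀ x : X, f x x = 0) → ∀ x : X, (φ f) x x = 0)

/-- An automorphism of the incidence algebra is a *fractional automorphism* if it is the
inner automorphism given by a diagonal unit whose diagonal entries are invertible central
elements of `R`. -/
def IsFracAut {X R : Type*} [Preorder X] [LocallyFiniteOrder X] [DecidableEq X] [Ring R]
    (φ : RingAut (IncidenceAlgebra R X)) : Prop :=
  ∃ (v : X → R) (d : (IncidenceAlgebra R X)ˣ),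
    (∀ x : X, v x ∈ Set.center R ∧ IsUnit (v x)) ∧
    (∀ x : X, (d : IncidenceAlgebra R X) x x = v x) ∧
    (∀ x y : X, x ≠ y → (d : IncidenceAlgebra R X) x y = 0) ∧
    (∀ f : IncidenceAlgebra R X, φ f = ↑d⁻¹ * f * ↑d)

/-- The comparability graph of a partially ordered set: `x` and `y` are adjacent iff
they are distinct and comparable. -/
def compGraph (X : Type*) [PartialOrder X] : SimpleGraph X where
  Adj x y := x < y ∨ y < x
  symm := ⟨fun _ _ h => h.symm⟩
  loopless := ⟨fun x h => h.elim (lt_irrefl x) (lt_irrefl x)⟩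

/-- The element `e_{xy}` of the incidence algebra: value `1` at `(x, y)` and `0`
elsewhere. -/
def eSingle {X : Type*} (R : Type*) [Ring R] [PartialOrder X] [DecidableEq X]
    (x y : X) (h : x ≤ y) : IncidenceAlgebra R X :=
  ⟨fun s t => if s = x ∧ t = y then 1 else 0, fun s t hst => by
    try dsimp only
    split_ifs with h'
    · exact absurd ((h'.1.trans_le h).trans_eq h'.2.symm) hst
    · rfl⟩

/-!
A multiplicative automorphism `φ` fixes the idempotents `e_{xx}`, so it maps
`e_{xy} = e_{xx} e_{xy} e_{yy}` into the corner `e_{xx} I e_{yy} = R e_{xy}`, i.e.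
`φ e_{xy} = c_{xy} e_{xy}`. Applying `φ` to `r e_{xy} = e_{xy} r`, with `r` a constant diagonal,
shows that `c_{xy}` is central, and comparing with `φ⁻¹` shows that it is a unit. A tree has no
cycles, so there is a potential `v : X → Z(R)ˣ` with `v_y = v_x c_{xy}` along every tree edge
`x < y`. Conjugation by `d = diag v` then undoes `φ` on the tree edges, and it commutes with `φ`
because `φ` fixes `d`.
-/

namespace SimpleGraph

variable {V G : Type*} {T : SimpleGraph V}

lemma Walk.prod_map_darts_concat [Monoid G] (f : T.Dart → G) {u v w : V} (p : T.Walk u v)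
    (h : T.Adj v w) :
    ((p.concat h).darts.map f).prod = (p.darts.map f).prod * f ⟨(v, w), h⟩ := by
  simp [Walk.darts_concat]

theorem IsTree.exists_potential [Group G] (hT : T.IsTree) (w : V → V → G)
    (hw : ∀ a b, T.Adj a b → w b a = (w a b)⁻¹) :
    ∃ v : V → G, ∀ a b, T.Adj a b → v b = v a * w a b := by
  obtain ⟨root⟩ := hT.connected.nonempty
  choose p hp using fun x => (hT.existsUnique_path root x).exists
  let weight : T.Dart → G := fun d => w d.fst d.snd
  refine ⟨fun x => ((p x).darts.map weight).prod, fun a b hab => ?_⟩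
  dsimp only
  -- of two adjacent vertices, one lies on the root path of the other, which is therefore the
  -- root path of the first extended by the edge
  by_cases hb : b ∈ (p a).support
  · rw [hT.isAcyclic.path_concat (hp b) (hp a) hab.symm hb, Walk.prod_map_darts_concat]
    simp [weight, hw a b hab]
  · have ha := hT.isAcyclic.mem_support_of_ne_mem_support_of_adj_of_isPath (hp b) (hp a)
      hab.symm hb
    rw [hT.isAcyclic.path_concat (hp a) (hp b) hab ha, Walk.prod_map_darts_concat]

end SimpleGraph

def Units.conjRingAut {A : Type*} [Semiring A] : Aˣ →* RingAut A :=
  (MulSemiringAction.toRingAut (ConjAct Aˣ) A).comp ConjAct.toConjAct.toMonoidHom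

lemma Units.conjRingAut_apply {A : Type*} [Semiring A] (u : Aˣ) (a : A) :
    Units.conjRingAut u a = u * a * ↑u⁻¹ := rfl

lemma Units.commute_conjRingAut {A : Type*} [Semiring A] {φ : RingAut A} {u : Aˣ}
    (hu : φ u = u) : Commute φ (Units.conjRingAut u) := by
  have hu' : φ ↑u⁻¹ = ↑u⁻¹ :=
    (Units.inv_eq_of_mul_eq_one_left (by rw [← hu, ← map_mul, u.inv_mul, map_one])).symm
  refine RingEquiv.ext fun a => ?_
  simp only [RingAut.mul_apply, Units.conjRingAut_apply, map_mul, hu, hu']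

namespace IncidenceAlgebra

variable {X R : Type*} [Preorder X]

section Zero

variable [Zero R]

def IsDiagonal (f : IncidenceAlgebra R X) : Prop :=
  ∀ x y, x ≠ y → f x y = 0

variable [DecidableEq X]

def diag (v : X → R) : IncidenceAlgebra R X :=
  ⟨fun s t => if s = t then v s else 0,
    fun s t hst => if_neg fun (h : s = t) => hst (h ▸ le_refl s)⟩

def single {x y : X} (h : x ≤ y) (r : R) : IncidenceAlgebra R X :=
  ⟨fun s t => if s = x ∧ t = y then r else 0,
    fun s t hst => if_neg fun (h' : s = x ∧ t = y) => hst (h'.1 ▸ h'.2 ▸ h)⟩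

lemma diag_apply (v : X → R) (s t : X) : diag v s t = if s = t then v s else 0 := rfl

lemma single_apply {x y : X} (h : x ≤ y) (r : R) (s t : X) :
    single h r s t = if s = x ∧ t = y then r else 0 := rfl

@[simp] lemma single_apply_self {x y : X} (h : x ≤ y) (r : R) : single h r x y = r :=
  if_pos ⟨rfl, rfl⟩

lemma diag_one [One R] : diag (1 : X → R) = 1 := rfl

lemma isDiagonal_diag (v : X → R) : IsDiagonal (diag v) :=
  fun _ _ h => if_neg h

lemma isDiagonal_single_self (x : X) (r : R) : IsDiagonal (single (le_refl x) r) :=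
  fun _ _ h => if_neg fun h' => h (h'.1.trans h'.2.symm)

end Zero

section Semiring

variable [LocallyFiniteOrder X] [Semiring R]

lemma mul_apply_of_isDiagonal_left {d : IncidenceAlgebra R X} (hd : IsDiagonal d)
    (f : IncidenceAlgebra R X) (a b : X) : (d * f) a b = d a a * f a b := by
  by_cases hab : a ≤ b
  · rw [mul_apply]
    refine Finset.sum_eq_single_of_mem a (Finset.mem_Icc.2 ⟨le_rfl, hab⟩) fun z _ hza => ?_
    rw [hd a z (Ne.symm hza), zero_mul]
  · rw [apply_eq_zero_of_not_le hab, apply_eq_zero_of_not_le hab f, mul_zero]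

lemma mul_apply_of_isDiagonal_right {d : IncidenceAlgebra R X} (hd : IsDiagonal d)
    (f : IncidenceAlgebra R X) (a b : X) : (f * d) a b = f a b * d b b := by
  by_cases hab : a ≤ b
  · rw [mul_apply]
    refine Finset.sum_eq_single_of_mem b (Finset.mem_Icc.2 ⟨hab, le_rfl⟩) fun z _ hzb => ?_
    rw [hd z b hzb, mul_zero]
  · rw [apply_eq_zero_of_not_le hab, apply_eq_zero_of_not_le hab f, zero_mul]

variable [DecidableEq X]

lemma diag_mul_diag (v w : X → R) : diag v * diag w = diag (v * w) := by
  ext a b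
  rw [mul_apply_of_isDiagonal_left (isDiagonal_diag v)]
  simp only [diag_apply]
  split_ifs <;> simp

lemma diag_mul_single (v : X → R) {x y : X} (h : x ≤ y) (r : R) :
    diag v * single h r = single h (v x * r) := by
  ext a b
  rw [mul_apply_of_isDiagonal_left (isDiagonal_diag v)]
  simp only [diag_apply, single_apply]
  split_ifs with hab <;> simp_all

lemma single_mul_diag (v : X → R) {x y : X} (h : x ≤ y) (r : R) :
    single h r * diag v = single h (r * v y) := by
  ext a b
  rw [mul_apply_of_isDiagonal_right (isDiagonal_diag v)]
  simp only [diag_apply, single_apply]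
  split_ifs with hab <;> simp_all

lemma single_mul_mul_single (f : IncidenceAlgebra R X) {x y : X} (h : x ≤ y) :
    single (le_refl x) 1 * f * single (le_refl y) 1 = single h (f x y) := by
  ext a b
  rw [mul_apply_of_isDiagonal_right (isDiagonal_single_self y 1),
    mul_apply_of_isDiagonal_left (isDiagonal_single_self x 1)]
  simp only [single_apply]
  by_cases ha : a = x <;> by_cases hb : b = y <;> simp [ha, hb]

end Semiring

section DiagonalFixing

variable [LocallyFiniteOrder X] [Semiring R]

lemma symm_apply_eq_self_of_isDiagonal (φ : RingAut (IncidenceAlgebra R X))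
    (hφ : ∀ f, IsDiagonal f → φ f = f) (f : IncidenceAlgebra R X) (hf : IsDiagonal f) :
    φ.symm f = f :=
  φ.symm_apply_eq.2 (hφ f hf).symm

variable [DecidableEq X]

lemma map_single {F : Type*} [FunLike F (IncidenceAlgebra R X) (IncidenceAlgebra R X)]
    [RingHomClass F (IncidenceAlgebra R X) (IncidenceAlgebra R X)] {φ : F}
    (hφ : ∀ f, IsDiagonal f → φ f = f) {x y : X} (h : x ≤ y) (r : R) :
    φ (single h r) = single h (r * φ (single h 1) x y) := by
  have hcorner : φ (single h 1) = single h (φ (single h 1) x y) := by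
    conv_lhs => rw [← single_apply_self h (1 : R), ← single_mul_mul_single _ h]
    rw [map_mul, map_mul, hφ _ (isDiagonal_single_self x 1),
      hφ _ (isDiagonal_single_self y 1), single_mul_mul_single]
  rw [← mul_one r, ← diag_mul_single (fun _ => r) h, map_mul, hφ _ (isDiagonal_diag _),
    hcorner, diag_mul_single, single_apply_self, mul_one]

lemma map_single_apply_mem_center {F : Type*}
    [FunLike F (IncidenceAlgebra R X) (IncidenceAlgebra R X)]
    [RingHomClass F (IncidenceAlgebra R X) (IncidenceAlgebra R X)] {φ : F}
    (hφ : ∀ f, IsDiagonal f → φ f = f) {x y : X} (h : x ≤ y) :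
    φ (single h 1) x y ∈ Set.center R := by
  refine Semigroup.mem_center_iff.2 fun r => ?_
  have hcomm : single h 1 * diag (fun _ => r) = single h r := by
    rw [single_mul_diag, one_mul]
  have := congrArg (fun f => φ f x y) hcomm
  simp only [map_mul, hφ _ (isDiagonal_diag _), map_single hφ h r,
    mul_apply_of_isDiagonal_right (isDiagonal_diag _), diag_apply, if_true,
    single_apply_self] at this
  exact this.symm

lemma symm_apply_single_mul_apply_single (φ : RingAut (IncidenceAlgebra R X))
    (hφ : ∀ f, IsDiagonal f → φ f = f) {x y : X} (h : x ≤ y) :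
    φ.symm (single h 1) x y * φ (single h 1) x y = 1 := by
  have := congrArg (fun f => f x y) (φ.apply_symm_apply (single h 1))
  rwa [map_single (symm_apply_eq_self_of_isDiagonal φ hφ) h, map_single hφ h,
    single_apply_self, single_apply_self, one_mul] at this

/-- The central unit `c` with `φ e_{xy} = c e_{xy}` (see `map_single`). -/
def centralCoeff (φ : RingAut (IncidenceAlgebra R X)) (hφ : ∀ f, IsDiagonal f → φ f = f)
    {x y : X} (h : x ≤ y) : (Submonoid.center R)ˣ where
  val := ⟨φ (single h 1) x y, map_single_apply_mem_center hφ h⟩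
  inv := ⟨φ.symm (single h 1) x y,
    map_single_apply_mem_center (symm_apply_eq_self_of_isDiagonal φ hφ) h⟩
  val_inv := Subtype.ext <| by
    simpa using symm_apply_single_mul_apply_single φ.symm
      (symm_apply_eq_self_of_isDiagonal φ hφ) h
  inv_val := Subtype.ext <| symm_apply_single_mul_apply_single φ hφ h

@[simp] lemma val_centralCoeff (φ : RingAut (IncidenceAlgebra R X))
    (hφ : ∀ f, IsDiagonal f → φ f = f) {x y : X} (h : x ≤ y) :
    ((centralCoeff φ hφ h : Submonoid.center R) : R) = φ (single h 1) x y :=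
  rfl

open Classical in
noncomputable def edgeCoeff (φ : RingAut (IncidenceAlgebra R X))
    (hφ : ∀ f, IsDiagonal f → φ f = f) (a b : X) : (Submonoid.center R)ˣ :=
  if h : a < b then centralCoeff φ hφ h.le
  else if h' : b < a then (centralCoeff φ hφ h'.le)⁻¹ else 1

lemma edgeCoeff_of_lt (φ : RingAut (IncidenceAlgebra R X)) (hφ : ∀ f, IsDiagonal f → φ f = f)
    {a b : X} (h : a < b) : edgeCoeff φ hφ a b = centralCoeff φ hφ h.le :=
  dif_pos h

lemma edgeCoeff_swap (φ : RingAut (IncidenceAlgebra R X)) (hφ : ∀ f, IsDiagonal f → φ f = f)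
    (a b : X) : edgeCoeff φ hφ b a = (edgeCoeff φ hφ a b)⁻¹ := by
  unfold edgeCoeff
  by_cases hab : a < b
  · rw [dif_neg hab.asymm, dif_pos hab, dif_pos hab]
  · by_cases hba : b < a
    · rw [dif_pos hba, dif_neg hab, dif_pos hba, inv_inv]
    · rw [dif_neg hab, dif_neg hba, dif_neg hba, dif_neg hab, inv_one]

end DiagonalFixing

section DiagUnit

variable [LocallyFiniteOrder X] [DecidableEq X] [Semiring R]

def diagUnit (v : X → Rˣ) : (IncidenceAlgebra R X)ˣ where
  val := diag fun x => (v x : R)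
  inv := diag fun x => ↑(v x)⁻¹
  val_inv := by rw [diag_mul_diag, ← diag_one]; congr 1; ext x; simp
  inv_val := by rw [diag_mul_diag, ← diag_one]; congr 1; ext x; simp

lemma diagUnit_val (v : X → Rˣ) :
    (diagUnit v : IncidenceAlgebra R X) = diag fun x => (v x : R) :=
  rfl

lemma diagUnit_inv (v : X → Rˣ) :
    (↑(diagUnit v)⁻¹ : IncidenceAlgebra R X) = diag fun x => ↑(v x)⁻¹ :=
  rfl

lemma conjRingAut_diagUnit_apply (v : X → Rˣ) (f : IncidenceAlgebra R X) (a b : X) :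
    Units.conjRingAut (diagUnit v) f a b = v a * f a b * ↑(v b)⁻¹ := by
  rw [Units.conjRingAut_apply, diagUnit_val, diagUnit_inv,
    mul_apply_of_isDiagonal_right (isDiagonal_diag _),
    mul_apply_of_isDiagonal_left (isDiagonal_diag _), diag_apply, diag_apply, if_pos rfl,
    if_pos rfl]

lemma conjRingAut_diagUnit_single (v : X → Rˣ) {x y : X} (h : x ≤ y) (r : R) :
    Units.conjRingAut (diagUnit v) (single h r) = single h (v x * r * ↑(v y)⁻¹) := by
  rw [Units.conjRingAut_apply, diagUnit_val, diagUnit_inv, diag_mul_single,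
    single_mul_diag]

end DiagUnit

end IncidenceAlgebra

open IncidenceAlgebra

section MultAut

variable {X R : Type*} [Preorder X] [LocallyFiniteOrder X] [DecidableEq X] [Ring R]

lemma IsMultAut.mul {φ ψ : RingAut (IncidenceAlgebra R X)} (hφ : IsMultAut φ)
    (hψ : IsMultAut ψ) : IsMultAut (φ * ψ) :=
  ⟨fun f hf => by rw [RingAut.mul_apply, hψ.1 f hf, hφ.1 f hf],
    fun f hf => hφ.2 _ (hψ.2 f hf)⟩

lemma isMultAut_conjRingAut_diagUnit {v : X → Rˣ} (hv : ∀ x, (v x : R) ∈ Set.center R) :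
    IsMultAut (Units.conjRingAut (diagUnit v)) := by
  refine ⟨fun f hf => ext fun a b _ => ?_, fun f hf a => ?_⟩
  · rw [conjRingAut_diagUnit_apply]
    rcases eq_or_ne a b with rfl | hab
    · rw [← Semigroup.mem_center_iff.1 (hv a), Units.mul_inv_cancel_right]
    · rw [hf a b hab, mul_zero, zero_mul]
  · rw [conjRingAut_diagUnit_apply, hf a, mul_zero, zero_mul]

lemma isFracAut_conjRingAut_inv_diagUnit {v : X → Rˣ} (hv : ∀ x, (v x : R) ∈ Set.center R) :
    IsFracAut (Units.conjRingAut (diagUnit v)⁻¹) :=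
  ⟨fun x => v x, diagUnit v, fun x => ⟨hv x, (v x).isUnit⟩, fun _ => if_pos rfl,
    fun _ _ h => isDiagonal_diag _ _ _ h, fun f => by rw [Units.conjRingAut_apply, inv_inv]⟩

end MultAut

theorem mult_aut_factors_through_tree_general {X R : Type*} [PartialOrder X]
    [LocallyFiniteOrder X] [DecidableEq X] [Ring R]
    (T : SimpleGraph X) (hTconn : T.Connected)
    (hTacyc : T.IsAcyclic)
    (φ : RingAut (IncidenceAlgebra R X)) (hφ : IsMultAut φ) :
    ∃ φ₀ φ₁ : RingAut (IncidenceAlgebra R X),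
      IsFracAut φ₀ ∧ IsMultAut φ₁ ∧
      (∀ (x y : X) (h : x < y), T.Adj x y →
        φ₁ (eSingle R x y h.le) = eSingle R x y h.le) ∧
      φ = φ₁ * φ₀ ∧ φ = φ₀ * φ₁ := by
  have hfix : ∀ f, IsDiagonal f → φ f = f := hφ.1
  obtain ⟨v, hv⟩ := SimpleGraph.IsTree.exists_potential ⟨hTconn, hTacyc⟩ (edgeCoeff φ hfix)
    fun a b _ => edgeCoeff_swap φ hfix a b
  let d := diagUnit fun x => Units.map (Submonoid.center R).subtype (v x)
  have hcenter (x : X) : (Units.map (Submonoid.center R).subtype (v x) : R) ∈ Set.center R :=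
    (v x : Submonoid.center R).2
  refine ⟨Units.conjRingAut d⁻¹, φ * Units.conjRingAut d,
    isFracAut_conjRingAut_inv_diagUnit hcenter, hφ.mul (isMultAut_conjRingAut_diagUnit hcenter),
    fun x y hxy hadj => ?_, by rw [map_inv, mul_inv_cancel_right], ?_⟩
  · have hratio : v x * (v y)⁻¹ * centralCoeff φ hfix hxy.le = 1 := by
      rw [hv x y hadj, edgeCoeff_of_lt φ hfix hxy, mul_inv, mul_inv_cancel_left,
        inv_mul_cancel]
    change φ (Units.conjRingAut d (single hxy.le 1)) = single hxy.le 1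
    rw [conjRingAut_diagUnit_single, map_single hfix, mul_one]
    congr 1
    simpa using congrArg (fun u : (Submonoid.center R)ˣ => ((u : Submonoid.center R) : R)) hratio
  · rw [map_inv, (Units.commute_conjRingAut (hfix _ (isDiagonal_diag _))).eq,
      inv_mul_cancel_left]

/-- For a finite poset with connected comparability graph and a spanning
tree `T`, every multiplicative automorphism factors as the product (in either order) of a
fractional automorphism and a multiplicative automorphism fixing all `e_{xy}` for tree
edges `x < y` (Theorem 3.6, decomposition part). -/
theorem mult_aut_factors_through_tree {X R : Type*} [PartialOrder X] [Fintype X]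
    [LocallyFiniteOrder X] [DecidableEq X] [Ring R]
    (hG : (compGraph X).Connected)
    (T : SimpleGraph X) (hT : T ≤ compGraph X) (hTconn : T.Connected)
    (hTacyc : T.IsAcyclic)
    (φ : RingAut (IncidenceAlgebra R X)) (hφ : IsMultAut φ) :
    ∃ φ₀ φ₁ : RingAut (IncidenceAlgebra R X),
      IsFracAut φ₀ ∧ IsMultAut φ₁ ∧
      (∀ (x y : X) (h : x < y), T.Adj x y →
        φ₁ (eSingle R x y h.le) = eSingle R x y h.le) ∧
      φ = φ₁ * φ₀ ∧ φ = φ₀ * φ₁ :=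
  mult_aut_factors_through_tree_general T hTconn hTacyc φ hφ
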